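/- arXiv:1909.03419 — 6 statements merged into one kernel-verified Lean document; each statement's English description precedes it below -/
import Mathlib

section
/- If ξ_i ≥ 0, ξ_j ≥ 0, ξ_k ≥ 0, then for all positive reals r_i, r_j, r_k one has sin²Θ_i·r_j²·r_k² + sin²Θ_j·r_k²·r_i² + sin²Θ_k·r_i²·r_j² + 2ξ_i·r_i²·r_j·r_k + 2ξ_j·r_j²·r_k·r_i + 2ξ_k·r_k²·r_i·r_j > 0. -/
/-!
Every summand is nonnegative: the first three are squares times squares, the last three are
`ξ`'s times positive monomials. Strict positivity comes from the `i`-terms: either `sin Θᵢ > 0`,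
or `Θᵢ = 0`, and then `ξᵢ = 1 + cos Θⱼ cos Θₖ > 0` because both cosines lie in `(-1, 1]`.
-/

open Real

lemma neg_one_lt_cos_of_nonneg_of_lt_pi {θ : ℝ} (h₀ : 0 ≤ θ) (hπ : θ < π) : -1 < cos θ := by
  simpa only [cos_pi] using cos_lt_cos_of_nonneg_of_le_pi h₀ le_rfl hπ

lemma sin_pos_or_cos_add_cos_mul_cos_pos {θi θj θk : ℝ} (hi₀ : 0 ≤ θi) (hi : θi < π)
    (hj₀ : 0 ≤ θj) (hj : θj < π) (hk₀ : 0 ≤ θk) (hk : θk < π) :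
    0 < sin θi ∨ 0 < cos θi + cos θj * cos θk := by
  rcases hi₀.lt_or_eq with hθi | hθi
  · exact .inl (sin_pos_of_pos_of_lt_pi hθi hi)
  right
  have hcj := neg_one_lt_cos_of_nonneg_of_lt_pi hj₀ hj
  have hck := neg_one_lt_cos_of_nonneg_of_lt_pi hk₀ hk
  have hcj₁ := cos_le_one θj
  have hck₁ := cos_le_one θk
  rw [← hθi, cos_zero]
  nlinarith

lemma sum_sq_mul_add_sum_mul_pos {si sj sk xi xj xk ri rj rk : ℝ}
    (hxi : 0 ≤ xi) (hxj : 0 ≤ xj) (hxk : 0 ≤ xk) (h : 0 < si ∨ 0 < xi)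
    (hri : 0 < ri) (hrj : 0 < rj) (hrk : 0 < rk) :
    0 < si ^ 2 * rj ^ 2 * rk ^ 2 + sj ^ 2 * rk ^ 2 * ri ^ 2 + sk ^ 2 * ri ^ 2 * rj ^ 2
      + 2 * xi * ri ^ 2 * rj * rk + 2 * xj * rj ^ 2 * rk * ri + 2 * xk * rk ^ 2 * ri * rj := by
  have hsj : 0 ≤ sj ^ 2 * rk ^ 2 * ri ^ 2 := by positivity
  have hsk : 0 ≤ sk ^ 2 * ri ^ 2 * rj ^ 2 := by positivity
  have hj : 0 ≤ 2 * xj * rj ^ 2 * rk * ri := by positivity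
  have hk : 0 ≤ 2 * xk * rk ^ 2 * ri * rj := by positivity
  rcases h with hs | hx
  · have hsi : 0 < si ^ 2 * rj ^ 2 * rk ^ 2 := by positivity
    have hi : 0 ≤ 2 * xi * ri ^ 2 * rj * rk := by positivity
    linarith
  · have hsi : 0 ≤ si ^ 2 * rj ^ 2 * rk ^ 2 := by positivity
    have hi : 0 < 2 * xi * ri ^ 2 * rj * rk := by positivity
    linarith

theorem stmt_1 (Θi Θj Θk : ℝ)
    (hi0 : 0 ≤ Θi) (hi1 : Θi < Real.pi)
    (hj0 : 0 ≤ Θj) (hj1 : Θj < Real.pi)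
    (hk0 : 0 ≤ Θk) (hk1 : Θk < Real.pi)
    (hξi : 0 ≤ Real.cos Θi + Real.cos Θj * Real.cos Θk)
    (hξj : 0 ≤ Real.cos Θj + Real.cos Θk * Real.cos Θi)
    (hξk : 0 ≤ Real.cos Θk + Real.cos Θi * Real.cos Θj)
    (ri rj rk : ℝ) (hri : 0 < ri) (hrj : 0 < rj) (hrk : 0 < rk) :
    0 < Real.sin Θi ^ 2 * rj ^ 2 * rk ^ 2
      + Real.sin Θj ^ 2 * rk ^ 2 * ri ^ 2
      + Real.sin Θk ^ 2 * ri ^ 2 * rj ^ 2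
      + 2 * (Real.cos Θi + Real.cos Θj * Real.cos Θk) * ri ^ 2 * rj * rk
      + 2 * (Real.cos Θj + Real.cos Θk * Real.cos Θi) * rj ^ 2 * rk * ri
      + 2 * (Real.cos Θk + Real.cos Θi * Real.cos Θj) * rk ^ 2 * ri * rj :=
  sum_sq_mul_add_sum_mul_pos hξi hξj hξk
    (sin_pos_or_cos_add_cos_mul_cos_pos hi0 hi1 hj0 hj1 hk0 hk1) hri hrj hrk
end

section
/- If ξ_i ≥ 0, ξ_j ≥ 0, ξ_k ≥ 0, then for all positive reals r_i, r_j, r_k the Euclidean side lengths satisfy the strict triangle inequalities: l_i < l_j + l_k, l_j < l_k + l_i, and l_k < l_i + l_j. -/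
/-!
With `A = l_i²`, `B = l_j²`, `C = l_k²`, Heron's quantity `2(AB + BC + CA) - A² - B² - C²`
equals `4 ((1 - I_i²) r_j² r_k² + (1 - I_j²) r_k² r_i² + (1 - I_k²) r_i² r_j²
+ 2 r_i r_j r_k (ξ_i r_i + ξ_j r_j + ξ_k r_k))`. Under `ξ ≥ 0` and `-1 < I ≤ 1` this is positive,
and positivity of Heron's quantity for nonnegative `l_i, l_j, l_k` is exactly the strict triangle
inequality.
-/

/-- Euclidean side length of a three-circle configuration:
`eucLen I rj rk = √(rj² + rk² + 2·I·rj·rk)`. -/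
noncomputable def eucLen (I rj rk : ℝ) : ℝ :=
  Real.sqrt (rj ^ 2 + rk ^ 2 + 2 * I * rj * rk)

theorem lt_add_and_lt_add_and_lt_add_of_heron_pos {a b c : ℝ}
    (ha : 0 ≤ a) (hb : 0 ≤ b) (hc : 0 ≤ c)
    (h : 0 < 2 * (a ^ 2 * b ^ 2 + b ^ 2 * c ^ 2 + c ^ 2 * a ^ 2)
      - (a ^ 2) ^ 2 - (b ^ 2) ^ 2 - (c ^ 2) ^ 2) :
    a < b + c ∧ b < c + a ∧ c < a + b := by
  have heron : 2 * (a ^ 2 * b ^ 2 + b ^ 2 * c ^ 2 + c ^ 2 * a ^ 2)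
      - (a ^ 2) ^ 2 - (b ^ 2) ^ 2 - (c ^ 2) ^ 2
      = (a + b + c) * ((b + c - a) * (c + a - b) * (a + b - c)) := by ring
  rw [heron] at h
  have hprod := pos_of_mul_pos_right h (by positivity)
  -- If, say, `b + c ≤ a`, the other two factors are at least `2c` and `2b`, so the product is `≤ 0`.
  refine ⟨?_, ?_, ?_⟩ <;> by_contra! hle
  · nlinarith [mul_nonneg (by linarith : 0 ≤ c + a - b) (by linarith : 0 ≤ a + b - c)]
  · nlinarith [mul_nonneg (by linarith : 0 ≤ b + c - a) (by linarith : 0 ≤ a + b - c)]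
  · nlinarith [mul_nonneg (by linarith : 0 ≤ b + c - a) (by linarith : 0 ≤ c + a - b)]

theorem eucLen_sq {I rj rk : ℝ} (hI : -1 ≤ I) (hrj : 0 ≤ rj) (hrk : 0 ≤ rk) :
    eucLen I rj rk ^ 2 = rj ^ 2 + rk ^ 2 + 2 * I * rj * rk :=
  Real.sq_sqrt <| by nlinarith [sq_nonneg (rj - rk), mul_nonneg hrj hrk]

theorem heron_eucLen_sq (I J K ri rj rk : ℝ) :
    let A := rj ^ 2 + rk ^ 2 + 2 * I * rj * rk
    let B := rk ^ 2 + ri ^ 2 + 2 * J * rk * ri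
    let C := ri ^ 2 + rj ^ 2 + 2 * K * ri * rj
    2 * (A * B + B * C + C * A) - A ^ 2 - B ^ 2 - C ^ 2
      = 4 * ((1 - I ^ 2) * rj ^ 2 * rk ^ 2 + (1 - J ^ 2) * rk ^ 2 * ri ^ 2
        + (1 - K ^ 2) * ri ^ 2 * rj ^ 2
        + 2 * ri * rj * rk * ((I + J * K) * ri + (J + K * I) * rj + (K + I * J) * rk)) := by
  intros; ring

theorem neg_one_lt_mul_of_mem_Ioc {J K : ℝ} (hJ : -1 < J) (hJ1 : J ≤ 1) (hK : -1 < K)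
    (hK1 : K ≤ 1) : -1 < J * K := by
  nlinarith [mul_pos (by linarith : 0 < 1 + J) (by linarith : 0 < 1 + K),
    mul_nonneg (by linarith : 0 ≤ 1 - J) (by linarith : 0 ≤ 1 - K)]

theorem heron_form_pos {I J K ri rj rk : ℝ}
    (hI : -1 < I) (hI1 : I ≤ 1) (hJ : -1 < J) (hJ1 : J ≤ 1) (hK : -1 < K) (hK1 : K ≤ 1)
    (hξi : 0 ≤ I + J * K) (hξj : 0 ≤ J + K * I) (hξk : 0 ≤ K + I * J)
    (hri : 0 < ri) (hrj : 0 < rj) (hrk : 0 < rk) :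
    0 < (1 - I ^ 2) * rj ^ 2 * rk ^ 2 + (1 - J ^ 2) * rk ^ 2 * ri ^ 2
        + (1 - K ^ 2) * ri ^ 2 * rj ^ 2
        + 2 * ri * rj * rk * ((I + J * K) * ri + (J + K * I) * rj + (K + I * J) * rk) := by
  have hJ2 : 0 ≤ 1 - J ^ 2 := by nlinarith
  have hK2 : 0 ≤ 1 - K ^ 2 := by nlinarith
  have hrest : 0 ≤ (1 - J ^ 2) * rk ^ 2 * ri ^ 2 + (1 - K ^ 2) * ri ^ 2 * rj ^ 2
      + 2 * ri * rj * rk * ((J + K * I) * rj + (K + I * J) * rk) := by positivity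
  -- At `I = 1` the first term vanishes, but then `ξ_i = 1 + J K > 0`.
  rcases hI1.lt_or_eq with hI1 | rfl
  · have : 0 < (1 - I ^ 2) * rj ^ 2 * rk ^ 2 := by
      have : 0 < 1 - I ^ 2 := by nlinarith
      positivity
    nlinarith [mul_nonneg (mul_nonneg (mul_nonneg hri.le hrj.le) hrk.le) (mul_nonneg hξi hri.le)]
  · have : 0 < 1 + J * K := by linarith [neg_one_lt_mul_of_mem_Ioc hJ hJ1 hK hK1]
    have : 0 < 2 * ri * rj * rk * ((1 + J * K) * ri) := by positivity
    nlinarith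

theorem neg_one_lt_cos {θ : ℝ} (h0 : 0 ≤ θ) (hπ : θ < Real.pi) : -1 < Real.cos θ :=
  Real.cos_pi ▸ Real.cos_lt_cos_of_nonneg_of_le_pi h0 le_rfl hπ

theorem stmt_2 (Θi Θj Θk : ℝ)
    (hi0 : 0 ≤ Θi) (hi1 : Θi < Real.pi)
    (hj0 : 0 ≤ Θj) (hj1 : Θj < Real.pi)
    (hk0 : 0 ≤ Θk) (hk1 : Θk < Real.pi)
    (hξi : 0 ≤ Real.cos Θi + Real.cos Θj * Real.cos Θk)
    (hξj : 0 ≤ Real.cos Θj + Real.cos Θk * Real.cos Θi)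
    (hξk : 0 ≤ Real.cos Θk + Real.cos Θi * Real.cos Θj)
    (ri rj rk : ℝ) (hri : 0 < ri) (hrj : 0 < rj) (hrk : 0 < rk) :
    eucLen (Real.cos Θi) rj rk < eucLen (Real.cos Θj) rk ri + eucLen (Real.cos Θk) ri rj ∧
    eucLen (Real.cos Θj) rk ri < eucLen (Real.cos Θk) ri rj + eucLen (Real.cos Θi) rj rk ∧
    eucLen (Real.cos Θk) ri rj < eucLen (Real.cos Θi) rj rk + eucLen (Real.cos Θj) rk ri := by
  have hci := neg_one_lt_cos hi0 hi1
  have hcj := neg_one_lt_cos hj0 hj1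
  have hck := neg_one_lt_cos hk0 hk1
  refine lt_add_and_lt_add_and_lt_add_of_heron_pos (Real.sqrt_nonneg _) (Real.sqrt_nonneg _)
    (Real.sqrt_nonneg _) ?_
  rw [eucLen_sq hci.le hrj.le hrk.le, eucLen_sq hcj.le hrk.le hri.le,
    eucLen_sq hck.le hri.le hrj.le, heron_eucLen_sq]
  exact mul_pos four_pos <| heron_form_pos hci (Real.cos_le_one _) hcj (Real.cos_le_one _) hck
    (Real.cos_le_one _) hξi hξj hξk hri hrj hrk
end

section
/- If ξ_i ≥ 0, ξ_j ≥ 0, ξ_k ≥ 0, then for all positive reals r_i, r_j, r_k the hyperbolic side lengths satisfy (cosh l_i · cosh l_j − cosh l_k)² < sinh² l_i · sinh² l_j, and consequently the strict triangle inequalities l_i < l_j + l_k, l_j < l_k + l_i, l_k < l_i + l_j hold. -/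
/-!
With `x = cosh l_i`, `y = cosh l_j`, `z = cosh l_k`, the first claim says exactly that the Gram
determinant `1 + 2xyz - x² - y² - z²` is positive. Substituting the defining formulas for the
`cosh l`'s and using `cosh² r = 1 + sinh² r`, this determinant becomes a sum of terms that are
nonnegative because `|I| ≤ 1` and `ξ ≥ 0`, one of which, `2 sinh² r_i sinh² r_j sinh² r_k (1 + I_i I_j I_k)`,
is strictly positive because no `I` equals `-1`. The strict bound
`|cosh l_i cosh l_j - cosh l_k| < sinh l_i sinh l_j` then places `cosh l_k` strictly between
`cosh (l_i - l_j)` and `cosh (l_i + l_j)`, which gives the triangle inequalities.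
-/

open Real Set

def gramDet (x y z : ℝ) : ℝ := 1 + 2 * x * y * z - x ^ 2 - y ^ 2 - z ^ 2

lemma gramDet_cosh_cosh (a b c : ℝ) :
    gramDet (cosh a) (cosh b) c = sinh a ^ 2 * sinh b ^ 2 - (cosh a * cosh b - c) ^ 2 := by
  rw [gramDet, sinh_sq, sinh_sq]
  ring

lemma gramDet_hyperbolic_eq (Ii Ij Ik ri rj rk : ℝ) :
    gramDet (cosh rj * cosh rk + Ii * sinh rj * sinh rk)
        (cosh rk * cosh ri + Ij * sinh rk * sinh ri)
        (cosh ri * cosh rj + Ik * sinh ri * sinh rj) =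
      sinh rj ^ 2 * sinh rk ^ 2 * (1 - Ii ^ 2) + sinh ri ^ 2 * sinh rk ^ 2 * (1 - Ij ^ 2)
        + sinh ri ^ 2 * sinh rj ^ 2 * (1 - Ik ^ 2)
        + 2 * sinh ri ^ 2 * sinh rj ^ 2 * sinh rk ^ 2 * (1 + Ii * Ij * Ik)
        + 2 * sinh ri * sinh rj * sinh rk *
          (sinh rk * cosh ri * cosh rj * (Ik + Ii * Ij)
            + sinh rj * cosh ri * cosh rk * (Ij + Ik * Ii)
            + sinh ri * cosh rj * cosh rk * (Ii + Ij * Ik)) := by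
  rw [gramDet]
  linear_combination
    (-cosh rk ^ 2 - cosh rj ^ 2 + 2 * cosh rj ^ 2 * cosh rk ^ 2
        + 2 * Ii * sinh rj * sinh rk * cosh rj * cosh rk) * cosh_sq' ri
      + (-1 + cosh rk ^ 2 - sinh ri ^ 2 + 2 * sinh ri ^ 2 * cosh rk ^ 2
        + 2 * Ij * sinh ri * sinh rk * cosh ri * cosh rk) * cosh_sq' rj
      + (sinh rj ^ 2 + sinh ri ^ 2 + 2 * sinh ri ^ 2 * sinh rj ^ 2
        + 2 * Ik * sinh ri * sinh rj * cosh ri * cosh rj) * cosh_sq' rk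

lemma mul_mem_Ioc_neg_one_one {x y : ℝ} (hx : x ∈ Ioc (-1) 1) (hy : y ∈ Ioc (-1) 1) :
    x * y ∈ Ioc (-1) 1 := by
  obtain ⟨hx₀, hx₁⟩ := hx
  obtain ⟨hy₀, hy₁⟩ := hy
  constructor
  · nlinarith [mul_pos (neg_lt_iff_pos_add'.1 hx₀) (neg_lt_iff_pos_add'.1 hy₀),
      mul_nonneg (sub_nonneg.2 hx₁) (sub_nonneg.2 hy₁)]
  · nlinarith [mul_nonneg (neg_le_iff_add_nonneg'.1 hx₀.le) (sub_nonneg.2 hy₁),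
      mul_nonneg (sub_nonneg.2 hx₁) (neg_le_iff_add_nonneg'.1 hy₀.le)]

lemma cos_mem_Ioc_of_mem_Ico {θ : ℝ} (hθ : θ ∈ Ico 0 π) : cos θ ∈ Ioc (-1) 1 :=
  ⟨by simpa using cos_lt_cos_of_nonneg_of_le_pi hθ.1 le_rfl hθ.2, cos_le_one θ⟩

lemma gramDet_hyperbolic_pos {Ii Ij Ik ri rj rk : ℝ}
    (hIi : Ii ∈ Ioc (-1) 1) (hIj : Ij ∈ Ioc (-1) 1) (hIk : Ik ∈ Ioc (-1) 1)
    (hξi : 0 ≤ Ii + Ij * Ik) (hξj : 0 ≤ Ij + Ik * Ii) (hξk : 0 ≤ Ik + Ii * Ij)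
    (hri : 0 < ri) (hrj : 0 < rj) (hrk : 0 < rk) :
    0 < gramDet (cosh rj * cosh rk + Ii * sinh rj * sinh rk)
      (cosh rk * cosh ri + Ij * sinh rk * sinh ri)
      (cosh ri * cosh rj + Ik * sinh ri * sinh rj) := by
  have one_sub_sq_nonneg {I : ℝ} (hI : I ∈ Ioc (-1) 1) : 0 ≤ 1 - I ^ 2 :=
    sub_nonneg.2 (sq_le_one_iff_abs_le_one I |>.2 (abs_le.2 ⟨hI.1.le, hI.2⟩))
  have hprod : 0 < 1 + Ii * Ij * Ik :=
    neg_lt_iff_pos_add'.1 (mul_mem_Ioc_neg_one_one (mul_mem_Ioc_neg_one_one hIi hIj) hIk).1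
  have hsi := sinh_pos_iff.2 hri
  have hsj := sinh_pos_iff.2 hrj
  have hsk := sinh_pos_iff.2 hrk
  have hIi' := one_sub_sq_nonneg hIi
  have hIj' := one_sub_sq_nonneg hIj
  have hIk' := one_sub_sq_nonneg hIk
  rw [gramDet_hyperbolic_eq]
  positivity

lemma abs_sub_lt_and_lt_add_of_sq_lt_sinh_sq_mul {a b c : ℝ} (ha : 0 < a) (hb : 0 < b)
    (h : (cosh a * cosh b - cosh c) ^ 2 < sinh a ^ 2 * sinh b ^ 2) :
    |a - b| < |c| ∧ |c| < a + b := by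
  have hs : 0 < sinh a * sinh b := mul_pos (sinh_pos_iff.2 ha) (sinh_pos_iff.2 hb)
  obtain ⟨hlo, hhi⟩ := abs_lt_of_sq_lt_sq' (h.trans_eq (mul_pow _ _ _).symm) hs.le
  constructor
  · exact cosh_lt_cosh.1 (by rw [cosh_sub]; linarith)
  · rw [← abs_of_pos (add_pos ha hb)]
    exact cosh_lt_cosh.1 (by rw [cosh_add]; linarith)

theorem stmt_4 (Θi Θj Θk : ℝ)
    (hi0 : 0 ≤ Θi) (hi1 : Θi < Real.pi)
    (hj0 : 0 ≤ Θj) (hj1 : Θj < Real.pi)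
    (hk0 : 0 ≤ Θk) (hk1 : Θk < Real.pi)
    (hξi : 0 ≤ Real.cos Θi + Real.cos Θj * Real.cos Θk)
    (hξj : 0 ≤ Real.cos Θj + Real.cos Θk * Real.cos Θi)
    (hξk : 0 ≤ Real.cos Θk + Real.cos Θi * Real.cos Θj)
    (ri rj rk : ℝ) (hri : 0 < ri) (hrj : 0 < rj) (hrk : 0 < rk)
    (li lj lk : ℝ) (hli : 0 < li) (hlj : 0 < lj) (hlk : 0 < lk)
    (hcli : Real.cosh li = Real.cosh rj * Real.cosh rk + Real.cos Θi * Real.sinh rj * Real.sinh rk)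
    (hclj : Real.cosh lj = Real.cosh rk * Real.cosh ri + Real.cos Θj * Real.sinh rk * Real.sinh ri)
    (hclk : Real.cosh lk = Real.cosh ri * Real.cosh rj + Real.cos Θk * Real.sinh ri * Real.sinh rj) :
    (Real.cosh li * Real.cosh lj - Real.cosh lk) ^ 2 < Real.sinh li ^ 2 * Real.sinh lj ^ 2 ∧
    li < lj + lk ∧ lj < lk + li ∧ lk < li + lj := by
  have hgram : 0 < gramDet (cosh li) (cosh lj) (cosh lk) := by
    rw [hcli, hclj, hclk]
    exact gramDet_hyperbolic_pos (cos_mem_Ioc_of_mem_Ico ⟨hi0, hi1⟩)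
      (cos_mem_Ioc_of_mem_Ico ⟨hj0, hj1⟩) (cos_mem_Ioc_of_mem_Ico ⟨hk0, hk1⟩)
      hξi hξj hξk hri hrj hrk
  have hsq : (cosh li * cosh lj - cosh lk) ^ 2 < sinh li ^ 2 * sinh lj ^ 2 := by
    rwa [gramDet_cosh_cosh, sub_pos] at hgram
  obtain ⟨hlo, hhi⟩ := abs_sub_lt_and_lt_add_of_sq_lt_sinh_sq_mul hli hlj hsq
  rw [abs_of_pos hlk] at hlo hhi
  obtain ⟨hlo₁, hlo₂⟩ := abs_lt.1 hlo
  exact ⟨hsq, by linarith, by linarith, hhi⟩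
end

section
/- Assume ξ_i ≥ 0, ξ_j ≥ 0, ξ_k ≥ 0. For any fixed positive reals r_j, r_k, the Euclidean angle function r_i ↦ ϑ_i(r_i, r_j, r_k) is strictly decreasing on (0, ∞). -/
/-- The Euclidean inner angle `ϑ_i` at the center of the circle of radius `r_i`
in the three-circle configuration with radii `r_i, r_j, r_k` and cosines of
exterior intersection angles `I_i, I_j, I_k`. -/
noncomputable def eucAngle (Ii Ij Ik ri rj rk : ℝ) : ℝ :=
  Real.arccos ((eucLen Ij rk ri ^ 2 + eucLen Ik ri rj ^ 2 - eucLen Ii rj rk ^ 2) /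
    (2 * eucLen Ij rk ri * eucLen Ik ri rj))

/-!
By the law of cosines, `cos ϑ_i = N / √W` with `N = (l_j² + l_k² - l_i²) / 2` and `W = l_j² l_k²`;
as `arccos` is decreasing, it suffices that this quotient increases in `r_i`. Both `W - N²`
(which keeps the quotient in `[-1, 1]`) and `2 N' W - N W'` (the sign of its derivative) are
polynomials in `r_i` whose coefficients are nonnegative combinations of `ξ_i, ξ_j, ξ_k` and the
`1 - I²`. The linear coefficient of the latter contains `2 + I_j² + I_k² + 4 I_i I_j I_k`, which is
positive as long as all cosines lie in `(-1, 1]`; it vanishes at `I_i = -1, I_j = I_k = 1`, where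
`ϑ_i ≡ 0`.
-/

open Real Set

theorem HasDerivAt.div_sqrt {f g : ℝ → ℝ} {f' g' x : ℝ} (hf : HasDerivAt f f' x)
    (hg : HasDerivAt g g' x) (hx : 0 < g x) :
    HasDerivAt (fun y => f y / √(g y)) ((2 * f' * g x - f x * g') / (2 * g x * √(g x))) x := by
  have hs : 0 < √(g x) := sqrt_pos.2 hx
  refine (hf.div (hg.sqrt hx.ne') hs.ne').congr_deriv ?_
  field_simp
  rw [sq_sqrt hx.le]
  ring

lemma div_sqrt_mem_Icc_of_sq_le {x y : ℝ} (h : x ^ 2 ≤ y) : x / √y ∈ Icc (-1) 1 := by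
  refine abs_le.mp ?_
  rw [abs_div, abs_of_nonneg (sqrt_nonneg y)]
  exact div_le_one_of_le₀ (abs_le_sqrt h) (sqrt_nonneg y)

def eucLenSq (I x y : ℝ) : ℝ := x ^ 2 + y ^ 2 + 2 * I * x * y

lemma eucLenSq_comm (I x y : ℝ) : eucLenSq I x y = eucLenSq I y x := by
  unfold eucLenSq; ring

lemma eucLenSq_pos {I x y : ℝ} (hI : -1 < I) (hx : 0 < x) (hy : 0 < y) :
    0 < eucLenSq I x y := by
  have hI' : 0 < 1 + I := by linarith
  have h : eucLenSq I x y = (x - y) ^ 2 + 2 * (1 + I) * x * y := by unfold eucLenSq; ring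
  rw [h]
  positivity

lemma sq_eucLen {I x y : ℝ} (hI : -1 < I) (hx : 0 < x) (hy : 0 < y) :
    eucLen I x y ^ 2 = eucLenSq I x y :=
  sq_sqrt (eucLenSq_pos hI hx hy).le

lemma hasDerivAt_eucLenSq (I y x : ℝ) :
    HasDerivAt (fun x => eucLenSq I x y) (2 * x + 2 * I * y) x := by
  refine (((hasDerivAt_pow 2 x).add_const (y ^ 2)).add
    (((hasDerivAt_id x).const_mul (2 * I)).mul_const y)).congr_deriv ?_
  norm_num

noncomputable def eucCos (a b c ri rj rk : ℝ) : ℝ :=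
  (eucLenSq b ri rk + eucLenSq c ri rj - eucLenSq a rj rk) / 2 /
    √(eucLenSq b ri rk * eucLenSq c ri rj)

section

variable {a b c ri rj rk : ℝ}

lemma eucAngle_eq_arccos_eucCos (ha : -1 < a) (hb : -1 < b) (hc : -1 < c)
    (hri : 0 < ri) (hrj : 0 < rj) (hrk : 0 < rk) :
    eucAngle a b c ri rj rk = arccos (eucCos a b c ri rj rk) := by
  have hprod : eucLen b rk ri * eucLen c ri rj = √(eucLenSq b ri rk * eucLenSq c ri rj) := by
    rw [sqrt_mul (eucLenSq_pos hb hri hrk).le, eucLenSq_comm b ri rk]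
    rfl
  rw [eucAngle, sq_eucLen hb hrk hri, sq_eucLen hc hri hrj, sq_eucLen ha hrj hrk, mul_assoc,
    hprod, eucLenSq_comm b rk ri, ← div_div, eucCos]

lemma sq_le_eucLenSq_mul_eucLenSq (ha : a ∈ Icc (-1) 1)
    (hb : b ∈ Icc (-1) 1) (hc : c ∈ Icc (-1) 1) (hξi : 0 ≤ a + b * c) (hξj : 0 ≤ b + c * a)
    (hξk : 0 ≤ c + a * b) (hri : 0 ≤ ri) (hrj : 0 ≤ rj) (hrk : 0 ≤ rk) :
    ((eucLenSq b ri rk + eucLenSq c ri rj - eucLenSq a rj rk) / 2) ^ 2 ≤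
      eucLenSq b ri rk * eucLenSq c ri rj := by
  have ha' : 0 ≤ 1 - a ^ 2 := by nlinarith [ha.1, ha.2]
  have hb' : 0 ≤ 1 - b ^ 2 := by nlinarith [hb.1, hb.2]
  have hc' : 0 ≤ 1 - c ^ 2 := by nlinarith [hc.1, hc.2]
  have h : eucLenSq b ri rk * eucLenSq c ri rj -
      ((eucLenSq b ri rk + eucLenSq c ri rj - eucLenSq a rj rk) / 2) ^ 2 =
      rj ^ 2 * rk ^ 2 * (1 - a ^ 2) + 2 * ri * rj * rk * (rk * (c + a * b) + rj * (b + c * a)) +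
        ri ^ 2 * (rk ^ 2 * (1 - b ^ 2) + rj ^ 2 * (1 - c ^ 2) + 2 * rj * rk * (a + b * c)) := by
    unfold eucLenSq; ring
  rw [← sub_nonneg, h]
  positivity

lemma two_add_sq_add_sq_add_four_mul_pos (ha : a ∈ Ioc (-1) 1) (hb : b ∈ Ioc (-1) 1)
    (hc : c ∈ Ioc (-1) 1) : 0 < 2 + b ^ 2 + c ^ 2 + 4 * a * b * c := by
  obtain ⟨ha₀, ha₁⟩ := ha
  obtain ⟨hb₀, hb₁⟩ := hb
  obtain ⟨hc₀, hc₁⟩ := hc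
  have hbc₀ : 0 < 1 + b * c := by
    nlinarith [mul_pos (by linarith : 0 < 1 + b) (by linarith : 0 < 1 + c),
      mul_nonneg (by linarith : 0 ≤ 1 - b) (by linarith : 0 ≤ 1 - c)]
  have hbc₁ : 0 ≤ 1 - b * c := by
    nlinarith [mul_nonneg (by linarith : 0 ≤ 1 + b) (by linarith : 0 ≤ 1 - c),
      mul_nonneg (by linarith : 0 ≤ 1 - b) (by linarith : 0 ≤ 1 + c)]
  -- `2 + b² + c² + 4abc = (1 + a) ((b + c)² / 2 + 1 + bc) + (1 - a) ((b - c)² / 2 + 1 - bc)`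
  nlinarith [mul_pos (by linarith : 0 < 1 + a) hbc₀, mul_nonneg (by linarith : 0 ≤ 1 - a) hbc₁,
    mul_nonneg (by linarith : 0 ≤ 1 + a) (sq_nonneg (b + c)),
    mul_nonneg (by linarith : 0 ≤ 1 - a) (sq_nonneg (b - c))]

lemma eucCos_deriv_numerator_pos (ha : a ∈ Ioc (-1) 1)
    (hb : b ∈ Ioc (-1) 1) (hc : c ∈ Ioc (-1) 1) (hξi : 0 ≤ a + b * c) (hξj : 0 ≤ b + c * a)
    (hξk : 0 ≤ c + a * b) (hri : 0 < ri) (hrj : 0 < rj) (hrk : 0 < rk) :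
    0 < 2 * (2 * ri + b * rk + c * rj) * (eucLenSq b ri rk * eucLenSq c ri rj) -
      (eucLenSq b ri rk + eucLenSq c ri rj - eucLenSq a rj rk) / 2 *
        ((2 * ri + 2 * b * rk) * eucLenSq c ri rj + eucLenSq b ri rk * (2 * ri + 2 * c * rj)) := by
  have hb' : 0 ≤ 1 - b ^ 2 := by nlinarith [hb.1, hb.2]
  have hc' : 0 ≤ 1 - c ^ 2 := by nlinarith [hc.1, hc.2]
  have hS := two_add_sq_add_sq_add_four_mul_pos ha hb hc
  have h : 2 * (2 * ri + b * rk + c * rj) * (eucLenSq b ri rk * eucLenSq c ri rj) -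
      (eucLenSq b ri rk + eucLenSq c ri rj - eucLenSq a rj rk) / 2 *
        ((2 * ri + 2 * b * rk) * eucLenSq c ri rj + eucLenSq b ri rk * (2 * ri + 2 * c * rj)) =
      2 * (rj ^ 2 * rk ^ 2 * (rk * (b + c * a) + rj * (c + a * b)) +
        ri * rj * rk *
          ((rj ^ 2 + rk ^ 2) * (a + b * c) + rj * rk * (2 + b ^ 2 + c ^ 2 + 4 * a * b * c)) +
        3 * ri ^ 2 * rj * rk * (rk * (c + a * b) + rj * (b + c * a)) +
        ri ^ 3 * (rk ^ 2 * (1 - b ^ 2) + rj ^ 2 * (1 - c ^ 2) + 2 * rj * rk * (a + b * c))) := by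
    unfold eucLenSq; ring
  rw [h]
  positivity

lemma strictMonoOn_eucCos (ha : a ∈ Ioc (-1) 1)
    (hb : b ∈ Ioc (-1) 1) (hc : c ∈ Ioc (-1) 1) (hξi : 0 ≤ a + b * c) (hξj : 0 ≤ b + c * a)
    (hξk : 0 ≤ c + a * b) (hrj : 0 < rj) (hrk : 0 < rk) :
    StrictMonoOn (fun ri => eucCos a b c ri rj rk) (Ioi 0) := by
  have hderiv : ∀ ri ∈ Ioi (0 : ℝ),
      ∃ d, 0 < d ∧ HasDerivAt (fun ri => eucCos a b c ri rj rk) d ri := by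
    intro ri hri
    have hU := eucLenSq_pos hb.1 hri hrk
    have hV := eucLenSq_pos hc.1 hri hrj
    have hnum : HasDerivAt (fun r => (eucLenSq b r rk + eucLenSq c r rj - eucLenSq a rj rk) / 2)
        (2 * ri + b * rk + c * rj) ri :=
      ((((hasDerivAt_eucLenSq b rk ri).add (hasDerivAt_eucLenSq c rj ri)).sub_const _).div_const
        2).congr_deriv (by ring)
    have hW := (hasDerivAt_eucLenSq b rk ri).mul (hasDerivAt_eucLenSq c rj ri)
    exact ⟨_, div_pos (eucCos_deriv_numerator_pos ha hb hc hξi hξj hξk hri hrj hrk)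
      (by positivity), hnum.div_sqrt hW (mul_pos hU hV)⟩
  refine strictMonoOn_of_deriv_pos (convex_Ioi 0) (fun ri hri => ?_) (fun ri hri => ?_)
  · obtain ⟨d, -, hd⟩ := hderiv ri hri
    exact hd.continuousAt.continuousWithinAt
  · rw [interior_Ioi] at hri
    obtain ⟨d, hd₀, hd⟩ := hderiv ri hri
    rwa [hd.deriv]

end

theorem stmt_5 (Θi Θj Θk : ℝ)
    (hi0 : 0 ≤ Θi) (hi1 : Θi < Real.pi)
    (hj0 : 0 ≤ Θj) (hj1 : Θj < Real.pi)
    (hk0 : 0 ≤ Θk) (hk1 : Θk < Real.pi)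
    (hξi : 0 ≤ Real.cos Θi + Real.cos Θj * Real.cos Θk)
    (hξj : 0 ≤ Real.cos Θj + Real.cos Θk * Real.cos Θi)
    (hξk : 0 ≤ Real.cos Θk + Real.cos Θi * Real.cos Θj)
    (rj rk : ℝ) (hrj : 0 < rj) (hrk : 0 < rk) :
    StrictAntiOn (fun ri => eucAngle (Real.cos Θi) (Real.cos Θj) (Real.cos Θk) ri rj rk)
      (Set.Ioi (0 : ℝ)) := by
  have ha := cos_mem_Ioc_of_mem_Ico ⟨hi0, hi1⟩
  have hb := cos_mem_Ioc_of_mem_Ico ⟨hj0, hj1⟩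
  have hc := cos_mem_Ioc_of_mem_Ico ⟨hk0, hk1⟩
  have hmaps : MapsTo (fun ri => eucCos (cos Θi) (cos Θj) (cos Θk) ri rj rk) (Ioi 0) (Icc (-1) 1) :=
    fun ri hri => div_sqrt_mem_Icc_of_sq_le <| sq_le_eucLenSq_mul_eucLenSq
      (Ioc_subset_Icc_self ha) (Ioc_subset_Icc_self hb) (Ioc_subset_Icc_self hc) hξi hξj hξk
      (le_of_lt hri) hrj.le hrk.le
  refine (strictAntiOn_arccos.comp_strictMonoOn
    (strictMonoOn_eucCos ha hb hc hξi hξj hξk hrj hrk) hmaps).congr fun ri hri =>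
    (eucAngle_eq_arccos_eucCos ha.1 hb.1 hc.1 hri hrj hrk).symm
end

section
/- Assume ξ_i ≥ 0, ξ_j ≥ 0, ξ_k ≥ 0, and let c be a positive real. Then the sum of Euclidean inner angles ϑ_i(r_i, r_j, r_k) + ϑ_j(r_i, r_j, r_k) tends to π (equivalently, ϑ_k tends to 0) as (r_i, r_j, r_k) tends to (0, 0, c) within the open positive octant (0,∞)³. -/
/-!
For positive radii the quantity `4 l_j² l_k² - (l_j² + l_k² - l_i²)²` is a nonnegative combination
of the `ξ`'s and the `1 - I²`'s, so the three lengths form a (possibly degenerate) Euclidean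
triangle and `ϑ_i + ϑ_j + ϑ_k = π`. The angle `ϑ_k` is continuous at `(0, 0, c)`, where its two
adjacent sides have length `c` and the opposite one has length `0`; hence `ϑ_k → arccos 1 = 0`.
Near `(0, 0, c)` the sides `l_i ≥ |r_j - r_k|` and `l_j ≥ |r_k - r_i|` stay positive, while
`l_k > 0` because `I_k > -1`.
-/

open Real EuclideanGeometry Filter Topology

theorem EuclideanGeometry.arccos_law_cos_eq_angle {V P : Type*} [NormedAddCommGroup V]
    [InnerProductSpace ℝ V] [MetricSpace P] [NormedAddTorsor V P] {p₁ p₂ p₃ : P}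
    (h₁ : p₁ ≠ p₂) (h₃ : p₃ ≠ p₂) :
    arccos ((dist p₁ p₂ ^ 2 + dist p₃ p₂ ^ 2 - dist p₁ p₃ ^ 2) /
      (2 * dist p₁ p₂ * dist p₃ p₂)) = ∠ p₁ p₂ p₃ := by
  have hd₁ := dist_pos.2 h₁
  have hd₃ := dist_pos.2 h₃
  have hratio : (dist p₁ p₂ ^ 2 + dist p₃ p₂ ^ 2 - dist p₁ p₃ ^ 2) /
      (2 * dist p₁ p₂ * dist p₃ p₂) = cos (∠ p₁ p₂ p₃) := by
    rw [div_eq_iff (by positivity)]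
    linear_combination -law_cos p₁ p₂ p₃
  rw [hratio, arccos_cos (angle_nonneg _ _ _) (angle_le_pi _ _ _)]

theorem exists_complex_triangle_of_sides {a b c : ℝ} (ha : 0 ≤ a) (hb : 0 ≤ b) (hc : 0 < c)
    (h : (b ^ 2 + c ^ 2 - a ^ 2) ^ 2 ≤ 4 * b ^ 2 * c ^ 2) :
    ∃ A B C : ℂ, dist C B = a ∧ dist C A = b ∧ dist B A = c := by
  -- `x` is the foot of the altitude from `C` onto the side `AB = [0, c]`.
  set x := (b ^ 2 + c ^ 2 - a ^ 2) / (2 * c) with hx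
  have hxb : x ^ 2 ≤ b ^ 2 := by
    rw [hx, div_pow, div_le_iff₀ (by positivity)]
    nlinarith
  have hy := sq_sqrt (sub_nonneg.2 hxb)
  refine ⟨0, c, ⟨x, √(b ^ 2 - x ^ 2)⟩, ?_, ?_, ?_⟩ <;>
    rw [Complex.dist_eq, ← sq_eq_sq₀ (norm_nonneg _) (by positivity), Complex.sq_norm,
      Complex.normSq_apply] <;> simp
  · rw [← pow_two, ← pow_two, hy, hx]; field_simp; ring
  · rw [← pow_two, ← pow_two, hy]; ring
  · ring

theorem arccos_add_arccos_add_arccos_eq_pi {a b c : ℝ} (ha : 0 < a) (hb : 0 < b) (hc : 0 < c)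
    (h : (b ^ 2 + c ^ 2 - a ^ 2) ^ 2 ≤ 4 * b ^ 2 * c ^ 2) :
    arccos ((b ^ 2 + c ^ 2 - a ^ 2) / (2 * b * c))
      + arccos ((c ^ 2 + a ^ 2 - b ^ 2) / (2 * c * a))
      + arccos ((a ^ 2 + b ^ 2 - c ^ 2) / (2 * a * b)) = π := by
  obtain ⟨A, B, C, rfl, rfl, rfl⟩ := exists_complex_triangle_of_sides ha.le hb.le hc h
  rw [dist_pos] at ha hb hc
  have hB := arccos_law_cos_eq_angle hc.symm ha
  have hC := arccos_law_cos_eq_angle ha.symm hb.symm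
  rw [dist_comm A B, dist_comm A C] at hB
  rw [dist_comm B C, dist_comm A C] at hC
  rw [arccos_law_cos_eq_angle hb hc, hB, hC]
  linarith [angle_add_angle_add_angle_eq_pi C hc]

theorem eucLen_sq_of_pos {I r s : ℝ} (h : 0 < eucLen I r s) :
    eucLen I r s ^ 2 = r ^ 2 + s ^ 2 + 2 * I * r * s :=
  sq_sqrt (sqrt_pos.1 h).le

theorem eucLen_pos {I r s : ℝ} (hI : -1 < I) (hr : 0 < r) (hs : 0 < s) : 0 < eucLen I r s :=
  sqrt_pos.2 (by nlinarith [sq_nonneg (r - s), mul_pos hr hs])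

theorem eucLen_pos_of_ne {I r s : ℝ} (hI : -1 ≤ I) (hr : 0 ≤ r) (hs : 0 ≤ s) (h : r ≠ s) :
    0 < eucLen I r s :=
  sqrt_pos.2 (by nlinarith [sq_pos_of_ne_zero (sub_ne_zero.2 h), mul_nonneg hr hs])

@[simp]
theorem eucLen_zero_left (I s : ℝ) : eucLen I 0 s = |s| := by
  simp [eucLen, sqrt_sq_eq_abs]

@[simp]
theorem eucLen_zero_right (I r : ℝ) : eucLen I r 0 = |r| := by
  simp [eucLen, sqrt_sq_eq_abs]

theorem eucAngle_zero_zero (Ii Ij Ik : ℝ) {r : ℝ} (hr : r ≠ 0) : eucAngle Ii Ij Ik r 0 0 = 0 := by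
  rw [eucAngle, eucLen_zero_left, eucLen_zero_right, eucLen_zero_left, abs_zero, mul_assoc,
    abs_mul_abs_self, sq_abs, ← pow_two, ← two_mul, zero_pow two_ne_zero, sub_zero,
    div_self (by positivity), arccos_one]

theorem eucAngle_add_eucAngle_add_eucAngle {Ii Ij Ik ri rj rk : ℝ}
    (hIi : Ii ^ 2 ≤ 1) (hIj : Ij ^ 2 ≤ 1) (hIk : Ik ^ 2 ≤ 1)
    (hξi : 0 ≤ Ii + Ij * Ik) (hξj : 0 ≤ Ij + Ik * Ii) (hξk : 0 ≤ Ik + Ii * Ij)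
    (hri : 0 ≤ ri) (hrj : 0 ≤ rj) (hrk : 0 ≤ rk)
    (hli : 0 < eucLen Ii rj rk) (hlj : 0 < eucLen Ij rk ri) (hlk : 0 < eucLen Ik ri rj) :
    eucAngle Ii Ij Ik ri rj rk + eucAngle Ij Ik Ii rj rk ri + eucAngle Ik Ii Ij rk ri rj = π := by
  refine arccos_add_arccos_add_arccos_eq_pi hli hlj hlk ?_
  rw [eucLen_sq_of_pos hli, eucLen_sq_of_pos hlj, eucLen_sq_of_pos hlk]
  linear_combination 8 * mul_nonneg (mul_nonneg hξi (sq_nonneg ri)) (mul_nonneg hrj hrk)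
    + 8 * mul_nonneg (mul_nonneg hξj (sq_nonneg rj)) (mul_nonneg hrk hri)
    + 8 * mul_nonneg (mul_nonneg hξk (sq_nonneg rk)) (mul_nonneg hri hrj)
    + 4 * mul_nonneg (sub_nonneg.2 hIi) (sq_nonneg (rj * rk))
    + 4 * mul_nonneg (sub_nonneg.2 hIj) (sq_nonneg (rk * ri))
    + 4 * mul_nonneg (sub_nonneg.2 hIk) (sq_nonneg (ri * rj))

theorem ContinuousAt.eucAngle {X : Type*} [TopologicalSpace X] {Ii Ij Ik : ℝ} {f g h : X → ℝ}
    {x : X} (hf : ContinuousAt f x) (hg : ContinuousAt g x) (hh : ContinuousAt h x)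
    (hlj : eucLen Ij (h x) (f x) ≠ 0) (hlk : eucLen Ik (f x) (g x) ≠ 0) :
    ContinuousAt (fun y => eucAngle Ii Ij Ik (f y) (g y) (h y)) x := by
  unfold _root_.eucAngle eucLen at *
  fun_prop (disch := simp [hlj, hlk])

theorem stmt_12_general (Θi Θj Θk : ℝ)
    (hk0 : 0 ≤ Θk) (hk1 : Θk < Real.pi)
    (hξi : 0 ≤ Real.cos Θi + Real.cos Θj * Real.cos Θk)
    (hξj : 0 ≤ Real.cos Θj + Real.cos Θk * Real.cos Θi)
    (hξk : 0 ≤ Real.cos Θk + Real.cos Θi * Real.cos Θj)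
    (c : ℝ) (hc : 0 < c) :
    Filter.Tendsto
      (fun p : ℝ × ℝ × ℝ =>
        eucAngle (Real.cos Θi) (Real.cos Θj) (Real.cos Θk) p.1 p.2.1 p.2.2
          + eucAngle (Real.cos Θj) (Real.cos Θk) (Real.cos Θi) p.2.1 p.2.2 p.1)
      (nhdsWithin (0, 0, c) (Set.Ioi 0 ×ˢ Set.Ioi 0 ×ˢ Set.Ioi 0))
      (nhds Real.pi) := by
  have hIk : -1 < cos Θk := by simpa using cos_lt_cos_of_nonneg_of_le_pi hk0 le_rfl hk1
  have hϑk : Tendsto (fun p : ℝ × ℝ × ℝ => eucAngle (cos Θk) (cos Θi) (cos Θj) p.2.2 p.1 p.2.1)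
      (𝓝 (0, 0, c)) (𝓝 0) := by
    have := ContinuousAt.eucAngle (Ii := cos Θk) (Ij := cos Θi) (Ik := cos Θj)
      (f := fun p : ℝ × ℝ × ℝ => p.2.2) (g := Prod.fst) (h := fun p => p.2.1) (x := (0, 0, c))
      (by fun_prop) (by fun_prop) (by fun_prop) (by simp [hc.ne']) (by simp [hc.ne'])
    simpa [eucAngle_zero_zero _ _ _ hc.ne'] using this.tendsto
  have hik : ∀ᶠ p : ℝ × ℝ × ℝ in 𝓝 (0, 0, c), p.1 < p.2.2 :=
    continuousAt_fst.eventually_lt continuousAt_snd.snd hc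
  have hjk : ∀ᶠ p : ℝ × ℝ × ℝ in 𝓝 (0, 0, c), p.2.1 < p.2.2 :=
    continuousAt_snd.fst.eventually_lt continuousAt_snd.snd hc
  have hsum : ∀ᶠ p : ℝ × ℝ × ℝ in 𝓝[Set.Ioi 0 ×ˢ Set.Ioi 0 ×ˢ Set.Ioi 0] (0, 0, c),
      eucAngle (cos Θi) (cos Θj) (cos Θk) p.1 p.2.1 p.2.2
        + eucAngle (cos Θj) (cos Θk) (cos Θi) p.2.1 p.2.2 p.1
        + eucAngle (cos Θk) (cos Θi) (cos Θj) p.2.2 p.1 p.2.1 = π := by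
    filter_upwards [self_mem_nhdsWithin, nhdsWithin_le_nhds hik, nhdsWithin_le_nhds hjk]
      with p ⟨hri, hrj, hrk⟩ hik hjk
    exact eucAngle_add_eucAngle_add_eucAngle (cos_sq_le_one _) (cos_sq_le_one _)
      (cos_sq_le_one _) hξi hξj hξk hri.le hrj.le hrk.le
      (eucLen_pos_of_ne (neg_one_le_cos _) hrj.le hrk.le hjk.ne)
      (eucLen_pos_of_ne (neg_one_le_cos _) hrk.le hri.le hik.ne')
      (eucLen_pos hIk hri hrj)
  rw [← sub_zero π]
  exact ((hϑk.mono_left nhdsWithin_le_nhds).const_sub π).congr' (hsum.mono fun p hp => by linarith)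

theorem stmt_12 (Θi Θj Θk : ℝ)
    (hi0 : 0 ≤ Θi) (hi1 : Θi < Real.pi)
    (hj0 : 0 ≤ Θj) (hj1 : Θj < Real.pi)
    (hk0 : 0 ≤ Θk) (hk1 : Θk < Real.pi)
    (hξi : 0 ≤ Real.cos Θi + Real.cos Θj * Real.cos Θk)
    (hξj : 0 ≤ Real.cos Θj + Real.cos Θk * Real.cos Θi)
    (hξk : 0 ≤ Real.cos Θk + Real.cos Θi * Real.cos Θj)
    (c : ℝ) (hc : 0 < c) :
    Filter.Tendsto
      (fun p : ℝ × ℝ × ℝ =>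
        eucAngle (Real.cos Θi) (Real.cos Θj) (Real.cos Θk) p.1 p.2.1 p.2.2
          + eucAngle (Real.cos Θj) (Real.cos Θk) (Real.cos Θi) p.2.1 p.2.2 p.1)
      (nhdsWithin (0, 0, c) (Set.Ioi 0 ×ˢ Set.Ioi 0 ×ˢ Set.Ioi 0))
      (nhds Real.pi) :=
  stmt_12_general Θi Θj Θk hk0 hk1 hξi hξj hξk c hc
end

section
/- Assume ξ_i ≥ 0, ξ_j ≥ 0, ξ_k ≥ 0, and let a, b be positive reals. Then the hyperbolic inner angle ϑ_i(r_i, r_j, r_k) tends to π − Θ_i as (r_i, r_j, r_k) tends to (0, a, b) within the open positive octant (0,∞)³. -/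
/-- `hypCosh I rj rk` is the hyperbolic cosine of the side length `l_i` of
the hyperbolic three-circle configuration:
`cosh l_i = cosh r_j · cosh r_k + I_i · sinh r_j · sinh r_k`. -/
noncomputable def hypCosh (I rj rk : ℝ) : ℝ :=
  Real.cosh rj * Real.cosh rk + I * Real.sinh rj * Real.sinh rk

/-- The hyperbolic inner angle `ϑ_i` at the center of the circle of radius `r_i`
in the hyperbolic three-circle configuration with radii `r_i, r_j, r_k` and
cosines of exterior intersection angles `I_i, I_j, I_k`:
`ϑ_i = arccos((cosh l_j · cosh l_k − cosh l_i)/(sinh l_j · sinh l_k))`,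
where `sinh l = √(cosh² l − 1)` since `l > 0`.  The angles `ϑ_j, ϑ_k` are
obtained by cyclic permutation of the arguments. -/
noncomputable def hypAngle (Ii Ij Ik ri rj rk : ℝ) : ℝ :=
  Real.arccos ((hypCosh Ij rk ri * hypCosh Ik ri rj - hypCosh Ii rj rk) /
    (Real.sqrt (hypCosh Ij rk ri ^ 2 - 1) * Real.sqrt (hypCosh Ik ri rj ^ 2 - 1)))

/-!
The formula for `ϑ_i` is continuous wherever its denominator `sinh l_j · sinh l_k` is nonzero,
which is the case at `(0, a, b)`: there `l_j = b` and `l_k = a`. Substituting `r_i = 0` gives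
`(cosh b cosh a − cosh a cosh b − I_i sinh a sinh b) / (sinh b sinh a) = −I_i`, so the limit is
`arccos (−cos Θ_i) = π − Θ_i`.
-/

open Real

theorem hypCosh_zero_right (I r : ℝ) : hypCosh I r 0 = cosh r := by
  simp [hypCosh]

theorem hypCosh_zero_left (I r : ℝ) : hypCosh I 0 r = cosh r := by
  simp [hypCosh]

theorem continuous_hypCosh (I : ℝ) : Continuous fun r : ℝ × ℝ => hypCosh I r.1 r.2 := by
  unfold hypCosh; fun_prop

theorem sqrt_cosh_sq_sub_one {x : ℝ} (hx : 0 ≤ x) : √(cosh x ^ 2 - 1) = sinh x := by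
  rw [cosh_sq, add_sub_cancel_right, sqrt_sq (sinh_nonneg_iff.2 hx)]

theorem continuousAt_hypAngle (Ii Ij Ik : ℝ) {ri rj rk : ℝ}
    (hj : 1 < hypCosh Ij rk ri ^ 2) (hk : 1 < hypCosh Ik ri rj ^ 2) :
    ContinuousAt (fun q : ℝ × ℝ × ℝ => hypAngle Ii Ij Ik q.1 q.2.1 q.2.2) (ri, rj, rk) := by
  have hlj : Continuous fun q : ℝ × ℝ × ℝ => hypCosh Ij q.2.2 q.1 :=
    (continuous_hypCosh Ij).comp (continuous_snd.snd.prodMk continuous_fst)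
  have hlk : Continuous fun q : ℝ × ℝ × ℝ => hypCosh Ik q.1 q.2.1 :=
    (continuous_hypCosh Ik).comp (continuous_fst.prodMk continuous_snd.fst)
  have hli : Continuous fun q : ℝ × ℝ × ℝ => hypCosh Ii q.2.1 q.2.2 :=
    (continuous_hypCosh Ii).comp continuous_snd
  refine continuous_arccos.continuousAt.comp (ContinuousAt.div ?_ ?_ ?_)
  · exact ((hlj.mul hlk).sub hli).continuousAt
  · exact (((hlj.pow 2).sub continuous_const).sqrt.mul
      ((hlk.pow 2).sub continuous_const).sqrt).continuousAt
  · exact mul_ne_zero (sqrt_ne_zero'.2 (by linarith)) (sqrt_ne_zero'.2 (by linarith))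

theorem hypAngle_zero_left (Ii Ij Ik : ℝ) {a b : ℝ} (ha : 0 < a) (hb : 0 < b) :
    hypAngle Ii Ij Ik 0 a b = arccos (-Ii) := by
  have hsa : 0 < sinh a := sinh_pos_iff.2 ha
  have hsb : 0 < sinh b := sinh_pos_iff.2 hb
  unfold hypAngle
  rw [hypCosh_zero_right, hypCosh_zero_left, sqrt_cosh_sq_sub_one ha.le,
    sqrt_cosh_sq_sub_one hb.le]
  congr 1
  unfold hypCosh
  field_simp
  ring

theorem stmt_13_general (Θi Θj Θk : ℝ)
    (hi0 : 0 ≤ Θi) (hi1 : Θi < Real.pi)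
    (a b : ℝ) (ha : 0 < a) (hb : 0 < b) :
    Filter.Tendsto
      (fun p : ℝ × ℝ × ℝ =>
        hypAngle (Real.cos Θi) (Real.cos Θj) (Real.cos Θk) p.1 p.2.1 p.2.2)
      (nhdsWithin (0, a, b) (Set.Ioi 0 ×ˢ Set.Ioi 0 ×ˢ Set.Ioi 0))
      (nhds (Real.pi - Θi)) := by
  have hlim : hypAngle (cos Θi) (cos Θj) (cos Θk) 0 a b = π - Θi := by
    rw [hypAngle_zero_left _ _ _ ha hb, arccos_neg, arccos_cos hi0 hi1.le]
  have hcont := continuousAt_hypAngle (cos Θi) (cos Θj) (cos Θk) (ri := 0)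
    (by rw [hypCosh_zero_right]; exact one_lt_pow₀ (one_lt_cosh.2 hb.ne') two_ne_zero)
    (by rw [hypCosh_zero_left]; exact one_lt_pow₀ (one_lt_cosh.2 ha.ne') two_ne_zero)
  exact hlim ▸ hcont.continuousWithinAt.tendsto

theorem stmt_13 (Θi Θj Θk : ℝ)
    (hi0 : 0 ≤ Θi) (hi1 : Θi < Real.pi)
    (hj0 : 0 ≤ Θj) (hj1 : Θj < Real.pi)
    (hk0 : 0 ≤ Θk) (hk1 : Θk < Real.pi)
    (hξi : 0 ≤ Real.cos Θi + Real.cos Θj * Real.cos Θk)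
    (hξj : 0 ≤ Real.cos Θj + Real.cos Θk * Real.cos Θi)
    (hξk : 0 ≤ Real.cos Θk + Real.cos Θi * Real.cos Θj)
    (a b : ℝ) (ha : 0 < a) (hb : 0 < b) :
    Filter.Tendsto
      (fun p : ℝ × ℝ × ℝ =>
        hypAngle (Real.cos Θi) (Real.cos Θj) (Real.cos Θk) p.1 p.2.1 p.2.2)
      (nhdsWithin (0, a, b) (Set.Ioi 0 ×ˢ Set.Ioi 0 ×ˢ Set.Ioi 0))
      (nhds (Real.pi - Θi)) :=
  stmt_13_general Θi Θj Θk hi0 hi1 a b ha hb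
end
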